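/- Let A be a gTA and q a location of A. If for some n a configuration of A^n containing at least one process at location q is reachable, then for every a ∈ ℕ there exists n' such that a configuration of A^{n'} with at least a processes at location q (all with the same clock valuation) is reachable. -/

import Mathlib

namespace DTN

/-- A clock valuation assigns a nonnegative real to every clock. -/
abbrev Val (C : Type) := C → NNReal

/-- Advance all clocks by a delay `δ`. -/
def Val.delay {C : Type} (v : Val C) (δ : NNReal) : Val C := fun c => v c + δ

open scoped Classical in
/-- Reset the clocks in `R` to zero. -/
noncomputable def Val.reset {C : Type} (v : Val C) (R : Set C) : Val C :=
  fun c => if c ∈ R then 0 else v c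

/-- Comparison relations used in clock constraints. -/
inductive CRel : Type | lt | le | eq | ge | gt

def CRel.holds : CRel → ℝ → ℝ → Prop
  | .lt, a, b => a < b
  | .le, a, b => a ≤ b
  | .eq, a, b => a = b
  | .ge, a, b => a ≥ b
  | .gt, a, b => a > b

/-- Clock constraints `Φ(C)`: conjunctions of atoms `c ∼ d` and `c ∼ c' + d`. -/
inductive ClockConstraint (C : Type) : Type where
  | tt : ClockConstraint C
  | and : ClockConstraint C → ClockConstraint C → ClockConstraint C
  | bound : C → CRel → ℕ → ClockConstraint C
  | diag : C → CRel → C → ℕ → ClockConstraint C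

/-- Satisfaction of a clock constraint by a valuation. -/
def Val.sat {C : Type} (v : Val C) : ClockConstraint C → Prop
  | .tt => True
  | .and φ ψ => Val.sat v φ ∧ Val.sat v ψ
  | .bound c rel d => CRel.holds rel (v c : ℝ) (d : ℝ)
  | .diag c rel c' d => CRel.holds rel (v c : ℝ) ((v c' : ℝ) + (d : ℝ))

/-- Renaming of the clocks of a constraint. -/
def ClockConstraint.map {C C' : Type} (f : C → C') : ClockConstraint C → ClockConstraint C'
  | .tt => .tt
  | .and φ ψ => .and (φ.map f) (ψ.map f)
  | .bound c rel d => .bound (f c) rel d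
  | .diag c rel c' d => .diag (f c) rel (f c') d

/-- The constants to which clock `c` is compared in a constraint. -/
def ClockConstraint.constsOn {C : Type} (c : C) : ClockConstraint C → Set ℕ
  | .tt => ∅
  | .and φ ψ => φ.constsOn c ∪ ψ.constsOn c
  | .bound c' _ d => {e | e = d ∧ c' = c}
  | .diag c' _ c'' d => {e | e = d ∧ (c' = c ∨ c'' = c)}

/-- `x` and `y` lie in the same elementary interval among
`(-∞,-B), [-B,-B], (-B,-B+1), …, [B,B], (B,∞)`. -/
def SameInterval (B x y : ℝ) : Prop :=
  ((x < -B) ↔ (y < -B)) ∧ ((B < x) ↔ (B < y)) ∧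
  (∀ k : ℤ, -B ≤ (k : ℝ) → (k : ℝ) ≤ B → (x = (k : ℝ) ↔ y = (k : ℝ))) ∧
  (∀ k : ℤ, -B ≤ (k : ℝ) → (k : ℝ) + 1 ≤ B →
      (((k : ℝ) < x ∧ x < (k : ℝ) + 1) ↔ ((k : ℝ) < y ∧ y < (k : ℝ) + 1)))

/-- Alur–Dill region equivalence (with diagonals) w.r.t. the bound function `M`. -/
def RegEquiv {C : Type} [Fintype C] (M : C → ℕ) (v v' : Val C) : Prop :=
  (∀ c, ⌊(v c : ℝ)⌋ = ⌊(v' c : ℝ)⌋ ∨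
      (((Finset.univ.sup M : ℕ) : ℝ) < (v c : ℝ) ∧ ((Finset.univ.sup M : ℕ) : ℝ) < (v' c : ℝ))) ∧
  (∀ c, (v c : ℝ) ≤ ((Finset.univ.sup M : ℕ) : ℝ) → (v' c : ℝ) ≤ ((Finset.univ.sup M : ℕ) : ℝ) →
      (Int.fract (v c : ℝ) = 0 ↔ Int.fract (v' c : ℝ) = 0)) ∧
  (∀ c c', (v c : ℝ) ≤ ((Finset.univ.sup M : ℕ) : ℝ) → (v c' : ℝ) ≤ ((Finset.univ.sup M : ℕ) : ℝ) →
      (Int.fract (v c : ℝ) ≤ Int.fract (v c' : ℝ) ↔ Int.fract (v' c : ℝ) ≤ Int.fract (v' c' : ℝ))) ∧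
  (∀ c c', SameInterval ((Finset.univ.sup M : ℕ) : ℝ) ((v c : ℝ) - (v c' : ℝ)) ((v' c : ℝ) - (v' c' : ℝ)))

/-- The `M`-region of a valuation: its equivalence class. -/
def regionOf {C : Type} [Fintype C] (M : C → ℕ) (v : Val C) : Set (Val C) :=
  {v' | RegEquiv M v v'}

/-- A set of valuations is an `M`-region if it is an equivalence class. -/
def IsRegion {C : Type} [Fintype C] (M : C → ℕ) (r : Set (Val C)) : Prop :=
  ∃ v, r = regionOf M v

/-- A transition of a timed automaton. -/
structure TATrans (Q C Sig : Type) where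
  src : Q
  guard : ClockConstraint C
  resets : Set C
  lab : Sig
  dst : Q

/-- A timed automaton. -/
structure TA (Q C Sig : Type) where
  init : Q
  eps : Sig
  trans : Set (TATrans Q C Sig)
  inv : Q → ClockConstraint C

/-- Delay transition of a TA. -/
def TA.DelayStep {Q C Sig : Type} (A : TA Q C Sig) (δ : NNReal) (s s' : Q × Val C) : Prop :=
  s'.1 = s.1 ∧ s'.2 = Val.delay s.2 δ ∧ Val.sat (Val.delay s.2 δ) (A.inv s.1)

/-- Discrete transition of a TA with label `σ`. -/
def TA.DiscStep {Q C Sig : Type} (A : TA Q C Sig) (σ : Sig) (s s' : Q × Val C) : Prop :=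
  ∃ t ∈ A.trans, t.src = s.1 ∧ t.lab = σ ∧ t.dst = s'.1 ∧
    Val.sat s.2 t.guard ∧ s'.2 = Val.reset s.2 t.resets ∧ Val.sat s'.2 (A.inv s'.1)

/-- Timed path of a TA, recorded as a list of (delay, label) pairs. -/
inductive TA.Run {Q C Sig : Type} (A : TA Q C Sig) :
    (Q × Val C) → List (NNReal × Sig) → (Q × Val C) → Prop
  | nil (s : Q × Val C) : TA.Run A s [] s
  | cons {s s₁ s₂ s' : Q × Val C} {l : List (NNReal × Sig)} (δ : NNReal) (σ : Sig) :
      A.DelayStep δ s s₁ → A.DiscStep σ s₁ s₂ → TA.Run A s₂ l s' →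
      TA.Run A s ((δ, σ) :: l) s'

/-- Total time delay of a timed path of a TA. -/
def totalDelay {Sig : Type} (l : List (NNReal × Sig)) : NNReal := (l.map Prod.fst).sum

/-- No state (satisfying its invariant) of the TA has a timelock. -/
def TA.TimelockFree {Q C Sig : Type} (A : TA Q C Sig) : Prop :=
  ∀ (q : Q) (v : Val C), Val.sat v (A.inv q) →
    ∀ b : NNReal, ∃ (l : List (NNReal × Sig)) (s' : Q × Val C) (δ : NNReal) (s'' : Q × Val C),
      TA.Run A (q, v) l s' ∧ A.DelayStep δ s' s'' ∧ b < totalDelay l + δ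

/-- The constants to which `c` is compared in guards or invariants of a TA. -/
def TA.clockConsts {Q C Sig : Type} (A : TA Q C Sig) (c : C) : Set ℕ :=
  {d | ∃ t ∈ A.trans, d ∈ t.guard.constsOn c} ∪ {d | ∃ q, d ∈ (A.inv q).constsOn c}

/-- The maximal bound function of a TA. -/
noncomputable def TA.boundFun {Q C Sig : Type} (A : TA Q C Sig) (c : C) : ℕ :=
  sSup (A.clockConsts c)

/-- Delay edge of the region automaton `RA^M(A)`. -/
def TA.delayEdge {Q C Sig : Type} [Fintype C] (A : TA Q C Sig) (M : C → ℕ)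
    (s s' : Q × Set (Val C)) : Prop :=
  IsRegion M s.2 ∧ IsRegion M s'.2 ∧ s'.1 = s.1 ∧
  ∃ v ∈ s.2, ∃ δ : NNReal, A.DelayStep δ (s.1, v) (s.1, Val.delay v δ) ∧ Val.delay v δ ∈ s'.2

/-- Discrete edge of the region automaton `RA^M(A)` labeled `σ`. -/
def TA.discEdge {Q C Sig : Type} [Fintype C] (A : TA Q C Sig) (M : C → ℕ) (σ : Sig)
    (s s' : Q × Set (Val C)) : Prop :=
  IsRegion M s.2 ∧ IsRegion M s'.2 ∧ ∃ v ∈ s.2, ∃ v' ∈ s'.2, A.DiscStep σ (s.1, v) (s'.1, v')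

/-- Reachability in the region automaton `RA^M(A)` from the initial region state. -/
inductive TA.RAReach {Q C Sig : Type} [Fintype C] (A : TA Q C Sig) (M : C → ℕ) :
    (Q × Set (Val C)) → Prop
  | init : TA.RAReach A M (A.init, regionOf M (fun _ => 0))
  | delay {s s' : Q × Set (Val C)} :
      TA.RAReach A M s → A.delayEdge M s s' → TA.RAReach A M s'
  | disc {s s' : Q × Set (Val C)} (σ : Sig) :
      TA.RAReach A M s → A.discEdge M σ s s' → TA.RAReach A M s'

/-- A path of the region automaton `RA^M(A)`: a list of edges, each recorded as the
kind of edge (`none` = delay edge, `some σ` = discrete edge) and its target state. -/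
inductive TA.RAPath {Q C Sig : Type} [Fintype C] (A : TA Q C Sig) (M : C → ℕ) :
    (Q × Set (Val C)) → List (Option Sig × (Q × Set (Val C))) → Prop
  | nil (s : Q × Set (Val C)) : TA.RAPath A M s []
  | delay {s s' : Q × Set (Val C)} {l} :
      A.delayEdge M s s' → TA.RAPath A M s' l → TA.RAPath A M s ((none, s') :: l)
  | disc {s s' : Q × Set (Val C)} {l} (σ : Sig) :
      A.discEdge M σ s s' → TA.RAPath A M s' l → TA.RAPath A M s ((some σ, s') :: l)

/-- A timed path of `A` follows a region path: it matches the kinds of the edges and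
its valuations lie in the corresponding regions; the final configuration is exposed. -/
inductive TA.Follows {Q C Sig : Type} (A : TA Q C Sig) :
    (Q × Val C) → List (Option Sig × (Q × Set (Val C))) → (Q × Val C) → Prop
  | nil (c : Q × Val C) : TA.Follows A c [] c
  | delay {c cf : Q × Val C} {l} (δ : NNReal) {q : Q} {r : Set (Val C)} (w : Val C) :
      A.DelayStep δ c (q, w) → w ∈ r → TA.Follows A (q, w) l cf →
      TA.Follows A c ((none, (q, r)) :: l) cf
  | disc {c cf : Q × Val C} {l} (σ : Sig) {q : Q} {r : Set (Val C)} (w : Val C) :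
      A.DiscStep σ c (q, w) → w ∈ r → TA.Follows A (q, w) l cf →
      TA.Follows A c ((some σ, (q, r)) :: l) cf

/-- A transition of a guarded timed automaton, with location guard `lguard`
(`none` stands for the trivial guard `⊤`). -/
structure GTATrans (Q C Sig : Type) where
  src : Q
  guard : ClockConstraint C
  resets : Set C
  lab : Sig
  lguard : Option Q
  dst : Q

/-- A guarded timed automaton (gTA). -/
structure GTA (Q C Sig : Type) where
  init : Q
  eps : Sig
  trans : Set (GTATrans Q C Sig)
  inv : Q → ClockConstraint C

/-- The unguarded version `UG(A)`: location guards erased, a fresh global clock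
(the `none` clock of `Option C`) added, never reset and in no guard or invariant. -/
def GTA.UG {Q C Sig : Type} (A : GTA Q C Sig) : TA Q (Option C) Sig where
  init := A.init
  eps := A.eps
  trans := {t' | ∃ t ∈ A.trans,
    t' = ⟨t.src, t.guard.map some, some '' t.resets, t.lab, t.dst⟩}
  inv := fun q => (A.inv q).map some

/-- The TA obtained from a gTA by deleting every transition with a
non-trivial location guard. -/
def GTA.unguardedPart {Q C Sig : Type} (A : GTA Q C Sig) : TA Q C Sig where
  init := A.init
  eps := A.eps
  trans := {t' | ∃ t ∈ A.trans, t.lguard = none ∧ t' = ⟨t.src, t.guard, t.resets, t.lab, t.dst⟩}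
  inv := A.inv

/-- Each transition carries a unique label different from `ε`. -/
def GTA.UniqueLabels {Q C Sig : Type} (A : GTA Q C Sig) : Prop :=
  (∀ t ∈ A.trans, t.lab ≠ A.eps) ∧
  (∀ t ∈ A.trans, ∀ t' ∈ A.trans, t.lab = t'.lab → t = t')

/-- The standing assumptions on a gTA: timelock-freedom regardless of location
guards, and uniquely labeled non-`ε` transitions. -/
def GTA.Nice {Q C Sig : Type} (A : GTA Q C Sig) : Prop :=
  A.unguardedPart.TimelockFree ∧ A.UniqueLabels

/-- The constants to which `c` is compared in guards or invariants of a gTA. -/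
def GTA.clockConsts {Q C Sig : Type} (A : GTA Q C Sig) (c : C) : Set ℕ :=
  {d | ∃ t ∈ A.trans, d ∈ t.guard.constsOn c} ∪ {d | ∃ q, d ∈ (A.inv q).constsOn c}

/-- The maximal bound function of a gTA. -/
noncomputable def GTA.boundFun {Q C Sig : Type} (A : GTA Q C Sig) (c : C) : ℕ :=
  sSup (A.clockConsts c)

/-- `N_A`: the number of pairs of a location and an `M`-region over the clocks
of `A` (without the global clock). -/
noncomputable def GTA.NA {Q C Sig : Type} [Fintype C] (A : GTA Q C Sig) : ℕ :=
  Nat.card (Q × {r : Set (Val C) // IsRegion A.boundFun r})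

/-- The bound function `M↗`: the maximal bound function on the clocks of `A` and
`2^(N_A+1)` on the global clock `t` (the `none` clock). -/
noncomputable def GTA.MF {Q C Sig : Type} [Fintype C] (A : GTA Q C Sig) : Option C → ℕ :=
  fun oc => oc.elim (2 ^ (A.NA + 1)) A.boundFun

/-- The slot of a set of valuations over `Option C`: the values of the global clock. -/
def slot {C : Type} (r : Set (Val (Option C))) : Set ℝ :=
  (fun v : Val (Option C) => ((v none : ℝ))) '' r

/-- Projection of a set of valuations over `Option C` to the clocks other than
the global clock. -/
def elimT {C : Type} (r : Set (Val (Option C))) : Set (Val C) :=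
  (fun (v : Val (Option C)) (c : C) => v (some c)) '' r

/-- A region is proper when the global clock is independent from the other clocks:
the region is determined by its projection to the other clocks together with its slot. -/
def Proper {C : Type} (r : Set (Val (Option C))) : Prop :=
  ∀ v : Val (Option C), (fun c => v (some c)) ∈ elimT r → ((v none : ℝ)) ∈ slot r → v ∈ r

/-- The slot of the `l`-th layer: `[0,0], (0,1), [1,1], (1,2), …`. -/
noncomputable def slotAt (l : ℕ) : Set ℝ :=
  if l % 2 = 0 then {((l / 2 : ℕ) : ℝ)}
  else Set.Ioo ((l / 2 : ℕ) : ℝ) (((l / 2 : ℕ) : ℝ) + 1)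

/-- The unguarded discrete step induced by the gTA transition `t` on valuations
over the clocks extended with the global clock. -/
def GTA.ugDisc {Q C Sig : Type} (A : GTA Q C Sig) (t : GTATrans Q C Sig)
    (v v' : Val (Option C)) : Prop :=
  Val.sat v (t.guard.map some) ∧ v' = Val.reset v (some '' t.resets) ∧
  Val.sat v' ((A.inv t.dst).map some)

/-- Membership of a region state in the `l`-th layer `W_l` computed by Algorithm 1. -/
inductive GTA.InLayer {Q C Sig : Type} [Fintype C] (A : GTA Q C Sig) :
    ℕ → Q × Set (Val (Option C)) → Prop
  | init : GTA.InLayer A 0 (A.init, regionOf A.MF (fun _ => 0))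
  | delayIn {l : ℕ} {q : Q} {r r' : Set (Val (Option C))} :
      GTA.InLayer A l (q, r) → A.UG.delayEdge A.MF (q, r) (q, r') →
      slot r' = slotAt l → GTA.InLayer A l (q, r')
  | discTop {l : ℕ} {r r' : Set (Val (Option C))} (t : GTATrans Q C Sig) :
      GTA.InLayer A l (t.src, r) → t ∈ A.trans → t.lguard = none →
      IsRegion A.MF r' → (∃ v ∈ r, ∃ v' ∈ r', A.ugDisc t v v') →
      GTA.InLayer A l (t.dst, r')
  | discGuard {l : ℕ} {r r' : Set (Val (Option C))} (t : GTATrans Q C Sig)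
      (ℓ : Q) (rγ : Set (Val (Option C))) :
      GTA.InLayer A l (t.src, r) → t ∈ A.trans → t.lguard = some ℓ →
      GTA.InLayer A l (ℓ, rγ) →
      IsRegion A.MF r' → (∃ v ∈ r, ∃ v' ∈ r', A.ugDisc t v v') →
      GTA.InLayer A l (t.dst, r')
  | advance {l : ℕ} {q : Q} {r r' : Set (Val (Option C))} :
      GTA.InLayer A l (q, r) → A.UG.delayEdge A.MF (q, r) (q, r') →
      slot r' = slotAt (l + 1) → GTA.InLayer A (l + 1) (q, r')

/-- The `l`-th layer with regions projected to the local clocks. -/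
def GTA.layerProj {Q C Sig : Type} [Fintype C] (A : GTA Q C Sig) (l : ℕ) :
    Set (Q × Set (Val C)) :=
  {s | ∃ r, GTA.InLayer A l (s.1, r) ∧ s.2 = elimT r}

/-- The terminating condition of Algorithm 1: the layer `l` coincides, up to shifting
the slot, with an earlier layer having a singleton slot. -/
def GTA.IsTermIndex {Q C Sig : Type} [Fintype C] (A : GTA Q C Sig) (l : ℕ) : Prop :=
  ∃ i < l, A.layerProj l = A.layerProj i ∧ ∃ x : ℝ, slotAt i = {x}

/-- The `ε`-edges of the DTN region automaton: within-layer or layer-advancing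
delay edges. -/
def GTA.SEpsEdge {Q C Sig : Type} [Fintype C] (A : GTA Q C Sig) (l l' : ℕ)
    (s s' : Q × Set (Val (Option C))) : Prop :=
  GTA.InLayer A l s ∧ (l' = l ∨ l' = l + 1) ∧ s'.1 = s.1 ∧
  A.UG.delayEdge A.MF s s' ∧ slot s'.2 = slotAt l'

/-- The `σ`-edges of the DTN region automaton in layer `l`. -/
def GTA.SDiscEdge {Q C Sig : Type} [Fintype C] (A : GTA Q C Sig) (l : ℕ) (σ : Sig)
    (s s' : Q × Set (Val (Option C))) : Prop :=
  GTA.InLayer A l s ∧ IsRegion A.MF s'.2 ∧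
  ∃ t ∈ A.trans, t.src = s.1 ∧ t.lab = σ ∧ t.dst = s'.1 ∧
    (∃ v ∈ s.2, ∃ v' ∈ s'.2, A.ugDisc t v v') ∧
    (∀ ℓ, t.lguard = some ℓ → ∃ rγ, GTA.InLayer A l (ℓ, rγ))

open scoped Classical in
/-- Reset exactly the clocks that are zero in the region `r'`. -/
noncomputable def resetByRegion {C : Type} (u : Val C) (r' : Set (Val (Option C))) : Val C :=
  fun c => if ∀ v ∈ r', v (some c) = 0 then 0 else u c

/-- Runs of the summary automaton `S(A)`: in a location `(q,r)` (of layer `l`) one may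
delay arbitrarily and then take an `ε`-edge (guard `r'|₋t`, no reset) or a `σ`-edge
(guard `r|₋t`, resetting the clocks that are zero in the target region). -/
inductive GTA.SRun {Q C Sig : Type} [Fintype C] (A : GTA Q C Sig) :
    ℕ → Q × Set (Val (Option C)) → Val C → List (NNReal × Sig) → Prop
  | nil (l : ℕ) (s : Q × Set (Val (Option C))) (u : Val C) : GTA.SRun A l s u []
  | eps {l l' : ℕ} {s s' : Q × Set (Val (Option C))} {u : Val C} {rest} (δ : NNReal) :
      A.SEpsEdge l l' s s' → Val.delay u δ ∈ elimT s'.2 →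
      GTA.SRun A l' s' (Val.delay u δ) rest →
      GTA.SRun A l s u ((δ, A.eps) :: rest)
  | disc {l : ℕ} {s s' : Q × Set (Val (Option C))} {u : Val C} {rest} (δ : NNReal) (σ : Sig) :
      A.SDiscEdge l σ s s' → Val.delay u δ ∈ elimT s.2 →
      GTA.SRun A l s' (resetByRegion (Val.delay u δ) s'.2) rest →
      GTA.SRun A l s u ((δ, σ) :: rest)

/-- The trace of a timed path: `ε`-steps are removed, their delays added to the
following step. -/
def mergeTrace {Sig : Type} [DecidableEq Sig] (eps : Sig) :
    NNReal → List (NNReal × Sig) → List (NNReal × Sig)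
  | _, [] => []
  | acc, (δ, σ) :: l =>
      if σ = eps then mergeTrace eps (acc + δ) l
      else (acc + δ, σ) :: mergeTrace eps 0 l

/-- The language of the summary automaton `S(A)`. -/
def GTA.LangS {Q C Sig : Type} [Fintype C] [DecidableEq Sig] (A : GTA Q C Sig) :
    Set (List (NNReal × Sig)) :=
  {tt | ∃ steps, GTA.SRun A 0 (A.init, regionOf A.MF (fun _ => 0)) (fun _ => 0) steps ∧
      mergeTrace A.eps 0 steps = tt}

/-- The initial configuration of the network `A^n`. -/
def GTA.initConfig {Q C Sig : Type} (A : GTA Q C Sig) (n : ℕ) : Fin n → Q × Val C :=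
  fun _ => (A.init, fun _ => 0)

/-- Delay transition of the network `A^n`. -/
def GTA.NetDelay {Q C Sig : Type} (A : GTA Q C Sig) {n : ℕ} (δ : NNReal)
    (κ κ' : Fin n → Q × Val C) : Prop :=
  ∀ i, (κ' i).1 = (κ i).1 ∧ (κ' i).2 = Val.delay (κ i).2 δ ∧
    Val.sat (Val.delay (κ i).2 δ) (A.inv (κ i).1)

/-- Discrete transition of the network `A^n`: process `i` fires a transition labeled
`σ`, whose location guard is trivial or witnessed by another process. -/
def GTA.NetDisc {Q C Sig : Type} (A : GTA Q C Sig) {n : ℕ} (i : Fin n) (σ : Sig)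
    (κ κ' : Fin n → Q × Val C) : Prop :=
  (∃ t ∈ A.trans, t.src = (κ i).1 ∧ t.lab = σ ∧ t.dst = (κ' i).1 ∧
    Val.sat (κ i).2 t.guard ∧ (κ' i).2 = Val.reset (κ i).2 t.resets ∧
    Val.sat (κ' i).2 (A.inv (κ' i).1) ∧
    (∀ ℓ, t.lguard = some ℓ → ∃ j, j ≠ i ∧ (κ j).1 = ℓ)) ∧
  (∀ j, j ≠ i → κ' j = κ j)

/-- Computations of the network `A^n`, recorded as lists of `(delay, process, label)`. -/
inductive GTA.NetRun {Q C Sig : Type} (A : GTA Q C Sig) :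
    {n : ℕ} → (Fin n → Q × Val C) → List (NNReal × ℕ × Sig) → (Fin n → Q × Val C) → Prop
  | nil {n : ℕ} (κ : Fin n → Q × Val C) : GTA.NetRun A κ [] κ
  | cons {n : ℕ} {κ κ₁ κ₂ κ' : Fin n → Q × Val C} {l} (δ : NNReal) (i : Fin n) (σ : Sig) :
      A.NetDelay δ κ κ₁ → A.NetDisc i σ κ₁ κ₂ → GTA.NetRun A κ₂ l κ' →
      GTA.NetRun A κ ((δ, (i : ℕ), σ) :: l) κ'

/-- Total time delay of a network computation. -/
def totalDelayN {Sig : Type} (l : List (NNReal × ℕ × Sig)) : NNReal := (l.map Prod.fst).sum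

/-- Projection of the trace of a network computation to process `1` (index `0`):
`ε`-steps and steps of other processes are removed, their delays added to the
following kept step, and process indices are dropped. -/
def proj1 {Sig : Type} [DecidableEq Sig] (eps : Sig) :
    NNReal → List (NNReal × ℕ × Sig) → List (NNReal × Sig)
  | _, [] => []
  | acc, (δ, i, σ) :: l =>
      if i = 0 ∧ σ ≠ eps then (acc + δ, σ) :: proj1 eps 0 l
      else proj1 eps (acc + δ) l

/-- Projection of the trace of a network computation to the first `k` processes. -/
def projTrace {Sig : Type} [DecidableEq Sig] (eps : Sig) (k : ℕ) :
    NNReal → List (NNReal × ℕ × Sig) → List (NNReal × ℕ × Sig)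
  | _, [] => []
  | acc, (δ, i, σ) :: l =>
      if i < k ∧ σ ≠ eps then (acc + δ, i, σ) :: projTrace eps k 0 l
      else projTrace eps k (acc + δ) l

/-- `L(A^∞)|₁`: projections to process 1 of traces of computations of `A^n`, `n ≥ 1`. -/
def GTA.LangProj1 {Q C Sig : Type} [DecidableEq Sig] (A : GTA Q C Sig) :
    Set (List (NNReal × Sig)) :=
  {tt | ∃ n, 1 ≤ n ∧ ∃ (steps : List (NNReal × ℕ × Sig)) (κ' : Fin n → Q × Val C),
    GTA.NetRun A (A.initConfig n) steps κ' ∧ proj1 A.eps 0 steps = tt}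

/-- `L(A^∞)|_{[1,k]}`. -/
def GTA.LangProjK {Q C Sig : Type} [DecidableEq Sig] (A : GTA Q C Sig) (k : ℕ) :
    Set (List (NNReal × ℕ × Sig)) :=
  {tt | ∃ n, 1 ≤ n ∧ ∃ (steps : List (NNReal × ℕ × Sig)) (κ' : Fin n → Q × Val C),
    GTA.NetRun A (A.initConfig n) steps κ' ∧ projTrace A.eps k 0 steps = tt}

/-- Total delay of a network computation up to (and including) the last step of
process 1. -/
def projDelay1Aux {Sig : Type} : List (NNReal × ℕ × Sig) → NNReal
  | [] => 0
  | (δ, i, _) :: l => if i = 0 then δ + (l.map Prod.fst).sum else projDelay1Aux l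

def projDelay1 {Sig : Type} (steps : List (NNReal × ℕ × Sig)) : NNReal :=
  projDelay1Aux steps.reverse

open scoped Classical in
/-- The unique elementary interval of the form `[k,k]` or `(k,k+1)` (`k ∈ ℕ`)
containing a nonnegative real `T`. -/
noncomputable def encInterval (T : ℝ) : Set ℝ :=
  if ∃ k : ℕ, T = (k : ℝ) then {T} else Set.Ioo ((⌊T⌋ : ℝ)) ((⌊T⌋ : ℝ) + 1)

/-- Runs of the product `⊗_{1≤i≤a} S(A)`: the copies share time delays and
interleave the discrete transitions of `S(A)`; copy `i` relabels `σ` as `(i,σ)`. -/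
inductive GTA.ProdSRun {Q C Sig : Type} [Fintype C] (A : GTA Q C Sig) {a : ℕ} :
    (Fin a → (ℕ × Q × Set (Val (Option C))) × Val C) → List (NNReal × ℕ × Sig) → Prop
  | nil (κ : Fin a → (ℕ × Q × Set (Val (Option C))) × Val C) : GTA.ProdSRun A κ []
  | eps {κ : Fin a → (ℕ × Q × Set (Val (Option C))) × Val C} {rest} (δ : NNReal)
      (i : Fin a) (l' : ℕ) (s' : Q × Set (Val (Option C))) :
      A.SEpsEdge (κ i).1.1 l' (κ i).1.2 s' →
      Val.delay (κ i).2 δ ∈ elimT s'.2 →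
      GTA.ProdSRun A
        (Function.update (fun j => ((κ j).1, Val.delay (κ j).2 δ)) i
          ((l', s'), Val.delay (κ i).2 δ)) rest →
      GTA.ProdSRun A κ ((δ, (i : ℕ), A.eps) :: rest)
  | disc {κ : Fin a → (ℕ × Q × Set (Val (Option C))) × Val C} {rest} (δ : NNReal)
      (i : Fin a) (σ : Sig) (s' : Q × Set (Val (Option C))) :
      A.SDiscEdge (κ i).1.1 σ (κ i).1.2 s' →
      Val.delay (κ i).2 δ ∈ elimT (κ i).1.2.2 →
      GTA.ProdSRun A
        (Function.update (fun j => ((κ j).1, Val.delay (κ j).2 δ)) i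
          (((κ i).1.1, s'), resetByRegion (Val.delay (κ i).2 δ) s'.2)) rest →
      GTA.ProdSRun A κ ((δ, (i : ℕ), σ) :: rest)

/-- The language of the product `⊗_{1≤i≤a} S(A)`. -/
def GTA.LangProd {Q C Sig : Type} [Fintype C] [DecidableEq Sig] (A : GTA Q C Sig) (a : ℕ) :
    Set (List (NNReal × ℕ × Sig)) :=
  {tt | ∃ steps, GTA.ProdSRun A
      (fun _ : Fin a => ((0, A.init, regionOf A.MF (fun _ => 0)), fun _ => 0)) steps ∧
    projTrace A.eps a 0 steps = tt}

/-- Global reachability properties: positive Boolean combinations of `#q ≥ 1`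
and `#q = 0`. -/
inductive GProp (Q : Type) : Type where
  | pos : Q → GProp Q
  | zero : Q → GProp Q
  | and : GProp Q → GProp Q → GProp Q
  | or : GProp Q → GProp Q → GProp Q

/-- Satisfaction of a global reachability property by a network configuration. -/
def GProp.sat {Q C : Type} {n : ℕ} (κ : Fin n → Q × Val C) : GProp Q → Prop
  | .pos q => ∃ i, (κ i).1 = q
  | .zero q => ∀ i, (κ i).1 ≠ q
  | .and φ ψ => GProp.sat κ φ ∧ GProp.sat κ ψ
  | .or φ ψ => GProp.sat κ φ ∨ GProp.sat κ ψ

/-- Satisfaction of a global reachability property by a set of region states. -/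
def GProp.satSet {Q C : Type} (RS : Set (Q × Set (Val (Option C)))) : GProp Q → Prop
  | .pos q => ∃ r, (q, r) ∈ RS
  | .zero q => ∀ r, (q, r) ∉ RS
  | .and φ ψ => GProp.satSet RS φ ∧ GProp.satSet RS ψ
  | .or φ ψ => GProp.satSet RS φ ∨ GProp.satSet RS ψ

/-- Membership of a set of region states in the `l`-th layer `𝒲_l` computed by the
global algorithm (Algorithm 2). -/
inductive GTA.InGLayer {Q C Sig : Type} [Fintype C] (A : GTA Q C Sig) :
    ℕ → Set (Q × Set (Val (Option C))) → Prop
  | init : GTA.InGLayer A 0 {(A.init, regionOf A.MF (fun _ => 0))}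
  | rule1 {l : ℕ} {RS : Set (Q × Set (Val (Option C)))}
      (F : Q × Set (Val (Option C)) → Set (Val (Option C))) :
      GTA.InGLayer A l RS →
      (∀ s ∈ RS, A.UG.delayEdge A.MF s (s.1, F s) ∧ slot (F s) = slotAt l) →
      GTA.InGLayer A l ((fun s => (s.1, F s)) '' RS)
  | rule2a {l : ℕ} {RS : Set (Q × Set (Val (Option C)))} {r r' : Set (Val (Option C))}
      (t : GTATrans Q C Sig) :
      GTA.InGLayer A l RS → (t.src, r) ∈ RS → t ∈ A.trans → IsRegion A.MF r' →
      (∃ v ∈ r, ∃ v' ∈ r', A.ugDisc t v v') →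
      (∀ ℓ, t.lguard = some ℓ → ∃ rγ, (ℓ, rγ) ∈ RS) →
      GTA.InGLayer A l (insert (t.dst, r') RS)
  | rule2b {l : ℕ} {RS : Set (Q × Set (Val (Option C)))} {r r' : Set (Val (Option C))}
      (t : GTATrans Q C Sig) :
      GTA.InGLayer A l RS → (t.src, r) ∈ RS → t ∈ A.trans → IsRegion A.MF r' →
      (∃ v ∈ r, ∃ v' ∈ r', A.ugDisc t v v') →
      (∀ ℓ, t.lguard = some ℓ → ∃ rγ, (ℓ, rγ) ∈ RS) →
      GTA.InGLayer A l (insert (t.dst, r') RS \ {(t.src, r)})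
  | advance {l : ℕ} {RS : Set (Q × Set (Val (Option C)))}
      (F : Q × Set (Val (Option C)) → Set (Val (Option C))) :
      GTA.InGLayer A l RS →
      (∀ s ∈ RS, A.UG.delayEdge A.MF s (s.1, F s) ∧ slot (F s) = slotAt (l + 1)) →
      GTA.InGLayer A (l + 1) ((fun s => (s.1, F s)) '' RS)

/-- Extend a valuation over `C` with the value `T` for the global clock. -/
def extendT {C : Type} (v : Val C) (T : NNReal) : Val (Option C) :=
  fun oc => oc.elim T v

/-- `supp(C)`: the region states occupied by a configuration at global time `T`. -/
def GTA.supp {Q C Sig : Type} [Fintype C] (A : GTA Q C Sig) {n : ℕ}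
    (κ : Fin n → Q × Val C) (T : NNReal) : Set (Q × Set (Val (Option C))) :=
  {s | ∃ i : Fin n, s = ((κ i).1, regionOf A.MF (extendT (κ i).2 T))}

/-- A transition of a lossy broadcast timed automaton; `send = true` is a sending
transition (`chan!!`), `send = false` a receiving transition (`chan??`). -/
structure LBTATrans (Q C Sig Λ : Type) where
  src : Q
  guard : ClockConstraint C
  resets : Set C
  lab : Sig
  chan : Λ
  send : Bool
  dst : Q

/-- A lossy broadcast timed automaton (LBTA). -/
structure LBTA (Q C Sig Λ : Type) where
  init : Q
  eps : Sig
  trans : Set (LBTATrans Q C Sig Λ)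
  inv : Q → ClockConstraint C

def LBTA.initConfig {Q C Sig Λ : Type} (B : LBTA Q C Sig Λ) (n : ℕ) : Fin n → Q × Val C :=
  fun _ => (B.init, fun _ => 0)

def LBTA.NetDelay {Q C Sig Λ : Type} (B : LBTA Q C Sig Λ) {n : ℕ} (δ : NNReal)
    (κ κ' : Fin n → Q × Val C) : Prop :=
  ∀ i, (κ' i).1 = (κ i).1 ∧ (κ' i).2 = Val.delay (κ i).2 δ ∧
    Val.sat (Val.delay (κ i).2 δ) (B.inv (κ i).1)

/-- One process fires the transition `t` of the LBTA. -/
def LBTA.Fire {Q C Sig Λ : Type} (B : LBTA Q C Sig Λ) (t : LBTATrans Q C Sig Λ)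
    (s s' : Q × Val C) : Prop :=
  t.src = s.1 ∧ t.dst = s'.1 ∧ Val.sat s.2 t.guard ∧ s'.2 = Val.reset s.2 t.resets ∧
  Val.sat s'.2 (B.inv t.dst)

/-- Computations of the network `B^n` of LBTAs, with flat traces: a broadcast step is
recorded as the sender's step followed by the receivers' steps (with delay `0`) in
increasing order of process index. -/
inductive LBTA.NetRun {Q C Sig Λ : Type} (B : LBTA Q C Sig Λ) :
    {n : ℕ} → (Fin n → Q × Val C) → List (NNReal × ℕ × Sig) → (Fin n → Q × Val C) → Prop
  | nil {n : ℕ} (κ : Fin n → Q × Val C) : LBTA.NetRun B κ [] κ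
  | step {n : ℕ} {κ κ₁ κ₂ κf : Fin n → Q × Val C} {rest} (δ : NNReal) (i : Fin n)
      (J : Finset (Fin n)) (a : Λ) (σ : Sig) (σs : Fin n → Sig) :
      B.NetDelay δ κ κ₁ →
      i ∉ J →
      (∃ t ∈ B.trans, t.chan = a ∧ t.send = true ∧ t.lab = σ ∧ B.Fire t (κ₁ i) (κ₂ i)) →
      (∀ j ∈ J, ∃ t ∈ B.trans, t.chan = a ∧ t.send = false ∧ t.lab = σs j ∧
          B.Fire t (κ₁ j) (κ₂ j)) →
      (∀ j, j ≠ i → j ∉ J → κ₂ j = κ₁ j) →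
      LBTA.NetRun B κ₂ rest κf →
      LBTA.NetRun B κ
        ((δ, (i : ℕ), σ) :: ((J.sort (· ≤ ·)).map (fun (j : Fin n) => ((0 : NNReal), (j : ℕ), σs j))) ++ rest)
        κf

/-- Each transition of the LBTA carries a unique label different from `ε`. -/
def LBTA.UniqueLabels {Q C Sig Λ : Type} (B : LBTA Q C Sig Λ) : Prop :=
  (∀ t ∈ B.trans, t.lab ≠ B.eps) ∧
  (∀ t ∈ B.trans, ∀ t' ∈ B.trans, t.lab = t'.lab → t = t')

/-- `L(B^∞)|_{[1,k]}` for a network of LBTAs. -/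
def LBTA.LangProjK {Q C Sig Λ : Type} [DecidableEq Sig] (B : LBTA Q C Sig Λ) (k : ℕ) :
    Set (List (NNReal × ℕ × Sig)) :=
  {tt | ∃ n, 1 ≤ n ∧ ∃ (steps : List (NNReal × ℕ × Sig)) (κ' : Fin n → Q × Val C),
    LBTA.NetRun B (B.initConfig n) steps κ' ∧ projTrace B.eps k 0 steps = tt}

/-! Run `a + 1` copies of the given computation in lock-step. A delay is taken by all copies
at once; a discrete step of process `i` is replayed by the copies of `i` one after the other,
with zero delays in between. A location guard of such a step was witnessed by some process
`j ≠ i` of the original network, and any copy of `j` witnesses it in the large network: it is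
in the same state as `j`, since only copies of `i` move, and it is not the moving process. -/

lemma Val.delay_zero {C : Type} (v : Val C) : Val.delay v 0 = v := by
  funext c
  simp [Val.delay]

namespace GTA

variable {Q C Sig : Type} {A : GTA Q C Sig} {m n : ℕ}

def InvSat (A : GTA Q C Sig) (κ : Fin n → Q × Val C) : Prop :=
  ∀ i, Val.sat (κ i).2 (A.inv (κ i).1)

lemma InvSat.comp {κ : Fin n → Q × Val C} (h : A.InvSat κ) (π : Fin m → Fin n) :
    A.InvSat (κ ∘ π) :=
  fun k => h (π k)

lemma InvSat.piecewise {κ κ' : Fin n → Q × Val C} (h : A.InvSat κ) (h' : A.InvSat κ')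
    (S : Finset (Fin n)) : A.InvSat (S.piecewise κ κ') := by
  intro i
  by_cases hi : i ∈ S
  · simpa [hi] using h i
  · simpa [hi] using h' i

lemma NetDelay.invSat {δ : NNReal} {κ κ' : Fin n → Q × Val C} (h : A.NetDelay δ κ κ') :
    A.InvSat κ' := by
  intro i
  obtain ⟨hq, hv, hsat⟩ := h i
  rw [hq, hv]
  exact hsat

lemma NetDisc.invSat {i : Fin n} {σ : Sig} {κ κ' : Fin n → Q × Val C}
    (h : A.NetDisc i σ κ κ') (hκ : A.InvSat κ) : A.InvSat κ' := by
  intro j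
  by_cases hj : j = i
  · obtain ⟨⟨t, -, -, -, -, -, -, hinv, -⟩, -⟩ := h
    exact hj ▸ hinv
  · rw [h.2 j hj]
    exact hκ j

lemma netDelay_zero {κ : Fin n → Q × Val C} (hκ : A.InvSat κ) : A.NetDelay 0 κ κ :=
  fun i => ⟨rfl, (Val.delay_zero _).symm, by rw [Val.delay_zero]; exact hκ i⟩

lemma NetDelay.comp {δ : NNReal} {κ κ' : Fin n → Q × Val C} (h : A.NetDelay δ κ κ')
    (π : Fin m → Fin n) : A.NetDelay δ (κ ∘ π) (κ' ∘ π) :=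
  fun k => h (π k)

lemma NetDisc.lift {i : Fin n} {σ : Sig} {κ₁ κ₂ : Fin n → Q × Val C} (h : A.NetDisc i σ κ₁ κ₂)
    {π : Fin m → Fin n} (hπ : Function.Surjective π) {κ : Fin m → Q × Val C} {k : Fin m}
    (hπk : π k = i) (hk : κ k = κ₁ i) (hκ : ∀ k', π k' ≠ i → κ k' = κ₁ (π k')) :
    A.NetDisc k σ κ (Function.update κ k (κ₂ i)) := by
  obtain ⟨⟨t, ht, hsrc, hlab, hdst, hg, hres, hinv, hlg⟩, -⟩ := h
  refine ⟨⟨t, ht, ?_, hlab, ?_, ?_, ?_, ?_, ?_⟩, fun j hj => Function.update_of_ne hj _ _⟩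
  · rwa [hk]
  · simpa using hdst
  · rwa [hk]
  · simpa [hk] using hres
  · simpa using hinv
  · intro ℓ hℓ
    obtain ⟨j, hji, hjℓ⟩ := hlg ℓ hℓ
    obtain ⟨k', rfl⟩ := hπ j
    have hk'k : k' ≠ k := fun hk' => hji (hk' ▸ hπk)
    exact ⟨k', hk'k, by rw [hκ k' (hπk ▸ hji), hjℓ]⟩

lemma NetRun.append {κ κ' κ'' : Fin n → Q × Val C} {l l' : List (NNReal × ℕ × Sig)}
    (h : A.NetRun κ l κ') (h' : A.NetRun κ' l' κ'') : A.NetRun κ (l ++ l') κ'' := by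
  induction h with
  | nil => exact h'
  | cons δ i σ hδ hdisc _ ih => exact .cons δ i σ hδ hdisc (ih h')

lemma exists_netRun_piecewise {δ : NNReal} {i : Fin n} {σ : Sig}
    {κ κ₁ κ₂ : Fin n → Q × Val C} (hδ : A.NetDelay δ κ κ₁) (h : A.NetDisc i σ κ₁ κ₂)
    {π : Fin m → Fin n} (hπ : Function.Surjective π) {S : Finset (Fin m)} (hS : S.Nonempty)
    (hSi : ∀ k ∈ S, π k = i) :
    ∃ l, A.NetRun (κ ∘ π) l (S.piecewise (κ₂ ∘ π) (κ₁ ∘ π)) := by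
  induction hS using Finset.Nonempty.cons_induction with
  | singleton k =>
    have hk : π k = i := hSi k (Finset.mem_singleton_self k)
    refine ⟨_, .cons δ k σ (hδ.comp π) ?_ (.nil _)⟩
    rw [Finset.piecewise_singleton, Function.comp_apply, hk]
    exact h.lift hπ hk (by rw [Function.comp_apply, hk]) fun _ _ => rfl
  | cons k S hkS hS ih =>
    have hk : π k = i := hSi k (Finset.mem_cons_self k S)
    obtain ⟨l, hl⟩ := ih fun k' hk' => hSi k' (Finset.mem_cons_of_mem hk')
    have hstep : A.NetDisc k σ (S.piecewise (κ₂ ∘ π) (κ₁ ∘ π))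
        ((Finset.cons k S hkS).piecewise (κ₂ ∘ π) (κ₁ ∘ π)) := by
      rw [Finset.cons_eq_insert, Finset.piecewise_insert, Function.comp_apply, hk]
      refine h.lift hπ hk (by simp [hkS, hk]) fun k' hk' => ?_
      by_cases hk'S : k' ∈ S
      · simp [hk'S, h.2 _ hk']
      · simp [hk'S]
    have hinv : A.InvSat (S.piecewise (κ₂ ∘ π) (κ₁ ∘ π)) :=
      ((h.invSat hδ.invSat).comp π).piecewise (hδ.invSat.comp π) S
    exact ⟨_, hl.append (.cons 0 k σ (netDelay_zero hinv) hstep (.nil _))⟩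

lemma exists_netRun_comp_of_step {δ : NNReal} {i : Fin n} {σ : Sig}
    {κ κ₁ κ₂ : Fin n → Q × Val C} (hδ : A.NetDelay δ κ κ₁) (h : A.NetDisc i σ κ₁ κ₂)
    {π : Fin m → Fin n} (hπ : Function.Surjective π) :
    ∃ l, A.NetRun (κ ∘ π) l (κ₂ ∘ π) := by
  obtain ⟨k, hk⟩ := hπ i
  have hfiber : (Finset.univ.filter (π · = i)).Nonempty := ⟨k, by simp [hk]⟩
  obtain ⟨l, hl⟩ := exists_netRun_piecewise hδ h hπ hfiber (by simp)
  have hall : (Finset.univ.filter (π · = i)).piecewise (κ₂ ∘ π) (κ₁ ∘ π) = κ₂ ∘ π := by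
    funext k'
    by_cases hk' : π k' = i
    · simp [hk']
    · simp [hk', h.2 _ hk']
  exact ⟨l, hall ▸ hl⟩

lemma NetRun.exists_comp {κ κ' : Fin n → Q × Val C} {l : List (NNReal × ℕ × Sig)}
    (h : A.NetRun κ l κ') {π : Fin m → Fin n} (hπ : Function.Surjective π) :
    ∃ l', A.NetRun (κ ∘ π) l' (κ' ∘ π) := by
  induction h with
  | nil => exact ⟨[], .nil _⟩
  | cons δ i σ hδ hdisc _ ih =>
    obtain ⟨l₁, h₁⟩ := exists_netRun_comp_of_step hδ hdisc hπ
    obtain ⟨l₂, h₂⟩ := ih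
    exact ⟨l₁ ++ l₂, h₁.append h₂⟩

end GTA

/-- if a location `q` is reachable by one process in some network, then
for every `a` there is a network in which at least `a` processes simultaneously occupy
`q` with the same clock valuation. -/
theorem stmt18 {Q C Sig : Type} (A : GTA Q C Sig) (q : Q)
    (h : ∃ n : ℕ, 1 ≤ n ∧ ∃ (steps : List (NNReal × ℕ × Sig)) (κ' : Fin n → Q × Val C),
        GTA.NetRun A (A.initConfig n) steps κ' ∧ ∃ i, (κ' i).1 = q) :
    ∀ a : ℕ, ∃ n' : ℕ, 1 ≤ n' ∧
      ∃ (steps : List (NNReal × ℕ × Sig)) (κ' : Fin n' → Q × Val C),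
        GTA.NetRun A (A.initConfig n') steps κ' ∧
        ∃ (v : Val C) (S : Finset (Fin n')), a ≤ S.card ∧ ∀ i ∈ S, κ' i = (q, v) := by
  obtain ⟨n, hn, steps, κ', hrun, i₀, rfl⟩ := h
  intro a
  let π : Fin ((a + 1) * n) → Fin n := fun k => (finProdFinEquiv.symm k).2
  have hπ : Function.Surjective π := fun i =>
    ⟨finProdFinEquiv (0, i), by simp only [π, Equiv.symm_apply_apply]⟩
  obtain ⟨l, hl⟩ := hrun.exists_comp hπ
  let copy : Fin (a + 1) → Fin ((a + 1) * n) := fun c => finProdFinEquiv (c, i₀)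
  have hcopy : Function.Injective copy :=
    finProdFinEquiv.injective.comp (Prod.mk_left_injective i₀)
  refine ⟨(a + 1) * n, Nat.mul_pos a.succ_pos hn, l, κ' ∘ π, hl, (κ' i₀).2,
    Finset.univ.image copy, ?_, ?_⟩
  · simp [Finset.card_image_of_injective _ hcopy]
  · simp only [Finset.mem_image, Finset.mem_univ, true_and, forall_exists_index]
    rintro _ c rfl
    simp only [Function.comp_apply, π, copy, Equiv.symm_apply_apply]

end DTN
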